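/- Let A ∈ ℝ^{m×n}, let S be a finite set of unit vectors in ℝ^m with σ_min(S) > 0 and f_A(S) > 0, and let T be any finite set of vectors in ℝ^m. Then Σ_{v∈S} ( f_A(T ∪ {v}) − f_A(T) ) ≥ σ_min(S)·( Σ_{j=1}^n max{0, f_{A_j}(S) − f_{A_j}(T)} )² / (4·f_A(S)); in particular Σ_{v∈S} ( f_A(T ∪ {v}) − f_A(T) ) ≥ σ_min(S)·( max{0, f_A(S) − f_A(T)} )² / (4·f_A(S)). -/

import Mathlib

open scoped RealInnerProductSpace

attribute [local instance] Classical.decEq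

noncomputable def fVec {m : ℕ} (u : EuclideanSpace ℝ (Fin m))
    (S : Finset (EuclideanSpace ℝ (Fin m))) : ℝ :=
  ‖(Submodule.orthogonalProjectionOnto (Submodule.span ℝ (S : Set (EuclideanSpace ℝ (Fin m)))) u :
      EuclideanSpace ℝ (Fin m))‖ ^ 2

noncomputable def fMat {m n : ℕ} (A : Fin n → EuclideanSpace ℝ (Fin m))
    (S : Finset (EuclideanSpace ℝ (Fin m))) : ℝ :=
  ∑ j, fVec (A j) S

noncomputable def sigmaMin {m : ℕ} (S : Finset (EuclideanSpace ℝ (Fin m))) : ℝ :=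
  sInf {r : ℝ | ∃ α : S → ℝ, ∑ v, (α v) ^ 2 = 1 ∧
    r = ‖∑ v, α v • (v : EuclideanSpace ℝ (Fin m))‖ ^ 2}

noncomputable def sigmaMax {m : ℕ} (S : Finset (EuclideanSpace ℝ (Fin m))) : ℝ :=
  sSup {r : ℝ | ∃ α : S → ℝ, ∑ v, (α v) ^ 2 = 1 ∧
    r = ‖∑ v, α v • (v : EuclideanSpace ℝ (Fin m))‖ ^ 2}

def IsGreedySeq {m nA nB : ℕ} (A : Fin nA → EuclideanSpace ℝ (Fin m))
    (B : Fin nB → EuclideanSpace ℝ (Fin m))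
    (T : ℕ → Finset (EuclideanSpace ℝ (Fin m))) (b : ℕ → Fin nB) : Prop :=
  T 0 = ∅ ∧ ∀ i, T (i + 1) = insert (B (b i)) (T i) ∧
    ∀ j, fMat A (insert (B j) (T i)) ≤ fMat A (insert (B (b i)) (T i))

/-!
Write `r j = A j - Π_T (A j)` for the residuals of the columns. Adding a vector `v` to `T` gains
at least `⟪r j, v⟫² / ‖v‖²` on column `j`, since `Π_{T ∪ {v}} r j` has norm at least that of its
component along `v`. For unit `v`, summing over `v ∈ S` gives at least `σ_min(S) ‖Π_S (r j)‖²`: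
writing `q = Π_S (r j) = ∑ α_v v`, the definition of `σ_min` gives `σ_min ∑ α_v² ≤ ‖q‖²`, while
`‖q‖² = ∑ α_v ⟪q, v⟫` and Cauchy–Schwarz turn this into `σ_min ‖q‖² ≤ ∑ ⟪q, v⟫²`.
On the other side, as `Π_S` is a contraction,
`f_{A j}(S) - f_{A j}(T) ≤ ‖Π_S (A j)‖² - ‖Π_S Π_T (A j)‖² ≤ 2 ‖Π_S (A j)‖ ‖Π_S (r j)‖`,
and Cauchy–Schwarz over `j` bounds the square of the summed gaps by `4 f_A(S) ∑ⱼ ‖Π_S (r j)‖²`.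
-/

namespace Submodule

variable {E : Type*} [NormedAddCommGroup E] [InnerProductSpace ℝ E]

theorem norm_sq_starProjection_sub_norm_sq_starProjection_of_le {K L : Submodule ℝ E}
    [K.HasOrthogonalProjection] [L.HasOrthogonalProjection] (hKL : K ≤ L) (u : E) :
    ‖L.starProjection u‖ ^ 2 - ‖K.starProjection u‖ ^ 2 =
      ‖L.starProjection (u - K.starProjection u)‖ ^ 2 := by
  have hLK : L.starProjection (K.starProjection u) = K.starProjection u :=
    starProjection_eq_self_iff.2 (hKL (K.starProjection_apply_mem u))
  have hKL' : K.starProjection (L.starProjection u) = K.starProjection u := by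
    rw [← ContinuousLinearMap.comp_apply, starProjection_comp_starProjection_of_le hKL]
  have hortho : ⟪L.starProjection u - K.starProjection u, K.starProjection u⟫ = 0 := by
    have h := K.starProjection_inner_eq_zero (L.starProjection u) _ (K.starProjection_apply_mem u)
    rwa [hKL'] at h
  rw [map_sub, hLK, norm_sub_sq_real, ← real_inner_self_eq_norm_sq (K.starProjection u)]
  rw [inner_sub_left] at hortho
  linarith

theorem inner_sub_starProjection_sq_le {K L : Submodule ℝ E}
    [K.HasOrthogonalProjection] [L.HasOrthogonalProjection] (hKL : K ≤ L) (u : E) {v : E}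
    (hv : v ∈ L) :
    ⟪u - K.starProjection u, v⟫ ^ 2 ≤
      ‖v‖ ^ 2 * (‖L.starProjection u‖ ^ 2 - ‖K.starProjection u‖ ^ 2) := by
  rw [norm_sq_starProjection_sub_norm_sq_starProjection_of_le hKL, ← starProjection_eq_self_iff.2 hv,
    ← inner_starProjection_left_eq_right, starProjection_eq_self_iff.2 hv, mul_comm, ← mul_pow]
  exact sq_le_sq' (neg_le_of_abs_le (abs_real_inner_le_norm _ _)) (real_inner_le_norm _ _)

theorem norm_sq_starProjection_sub_norm_sq_starProjection_le (K L : Submodule ℝ E)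
    [K.HasOrthogonalProjection] [L.HasOrthogonalProjection] (u : E) :
    ‖K.starProjection u‖ ^ 2 - ‖L.starProjection u‖ ^ 2 ≤
      2 * ‖K.starProjection u‖ * ‖K.starProjection (u - L.starProjection u)‖ := by
  rw [map_sub]
  set a := K.starProjection u
  set c := K.starProjection (L.starProjection u)
  have hc : ‖c‖ ≤ ‖L.starProjection u‖ := K.norm_starProjection_apply_le _
  have hc' : ‖c‖ ^ 2 = ‖a‖ ^ 2 - 2 * ⟪a, a - c⟫ + ‖a - c‖ ^ 2 := by
    rw [← norm_sub_sq_real, sub_sub_cancel]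
  nlinarith [real_inner_le_norm a (a - c), norm_nonneg c, sq_nonneg ‖a - c‖]

end Submodule

local notation "π[" S "]" => Submodule.starProjection (Submodule.span ℝ (↑S : Set _))

section Euclidean

open Submodule

variable {m : ℕ}

local notation "E" => EuclideanSpace ℝ (Fin m)

theorem sigmaMin_nonneg (S : Finset E) : 0 ≤ sigmaMin S :=
  Real.sInf_nonneg (by rintro _ ⟨α, -, rfl⟩; positivity)

theorem sigmaMin_mul_sum_sq_le (S : Finset E) (α : S → ℝ) :
    sigmaMin S * ∑ v, α v ^ 2 ≤ ‖∑ v, α v • (v : E)‖ ^ 2 := by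
  obtain hN | hN := (Finset.sum_nonneg fun v _ => sq_nonneg (α v) : 0 ≤ ∑ v, α v ^ 2).eq_or_lt
  · rw [← hN, mul_zero]; positivity
  have hs : Real.sqrt (∑ v, α v ^ 2) ^ 2 = ∑ v, α v ^ 2 := Real.sq_sqrt hN.le
  have hmem : ‖∑ v, α v • (v : E)‖ ^ 2 / ∑ v, α v ^ 2 ∈ {r : ℝ | ∃ β : S → ℝ, ∑ v, β v ^ 2 = 1 ∧
      r = ‖∑ v, β v • (v : E)‖ ^ 2} := by
    refine ⟨fun v => (Real.sqrt (∑ v, α v ^ 2))⁻¹ * α v, ?_, ?_⟩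
    · simp_rw [mul_pow, ← Finset.mul_sum, inv_pow, hs, inv_mul_cancel₀ hN.ne']
    · simp_rw [← smul_smul, ← Finset.smul_sum, norm_smul, mul_pow, norm_inv,
        Real.norm_eq_abs, abs_of_pos (Real.sqrt_pos.2 hN), inv_pow, hs, inv_mul_eq_div]
  have hbdd : BddBelow {r : ℝ | ∃ β : S → ℝ, ∑ v, β v ^ 2 = 1 ∧
      r = ‖∑ v, β v • (v : E)‖ ^ 2} := ⟨0, by rintro _ ⟨β, -, rfl⟩; positivity⟩
  exact (le_div_iff₀ hN).1 (csInf_le hbdd hmem)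

theorem sigmaMin_mul_norm_sq_le_sum_inner_sq (S : Finset E) {q : E}
    (hq : q ∈ span ℝ (S : Set E)) :
    sigmaMin S * ‖q‖ ^ 2 ≤ ∑ v ∈ S, ⟪q, v⟫ ^ 2 := by
  obtain ⟨f, -, rfl⟩ := mem_span_finset.1 hq
  set q := ∑ v ∈ S, f v • v
  obtain hq0 | hq0 := (norm_nonneg q).eq_or_lt
  · rw [← hq0, zero_pow two_ne_zero, mul_zero]; positivity
  have hσ : sigmaMin S * ∑ v ∈ S, f v ^ 2 ≤ ‖q‖ ^ 2 := by
    simpa only [Finset.sum_coe_sort S (fun v => f v ^ 2), Finset.sum_coe_sort S (fun v => f v • v)]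
      using sigmaMin_mul_sum_sq_le S (fun v => f v)
  have hexpand : ‖q‖ ^ 2 = ∑ v ∈ S, f v * ⟪q, v⟫ := by
    rw [← real_inner_self_eq_norm_sq]
    nth_rw 1 [show q = ∑ v ∈ S, f v • v from rfl]
    rw [sum_inner]
    exact Finset.sum_congr rfl fun v _ => by rw [real_inner_smul_left, real_inner_comm]
  have hcs : (‖q‖ ^ 2) ^ 2 ≤ (∑ v ∈ S, f v ^ 2) * ∑ v ∈ S, ⟪q, v⟫ ^ 2 := by
    rw [hexpand]; exact Finset.sum_mul_sq_le_sq_mul_sq S f _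
  refine le_of_mul_le_mul_right ?_ (pow_pos hq0 2)
  calc sigmaMin S * ‖q‖ ^ 2 * ‖q‖ ^ 2 = sigmaMin S * (‖q‖ ^ 2) ^ 2 := by ring
    _ ≤ sigmaMin S * ((∑ v ∈ S, f v ^ 2) * ∑ v ∈ S, ⟪q, v⟫ ^ 2) := by
      gcongr; exact sigmaMin_nonneg S
    _ = (sigmaMin S * ∑ v ∈ S, f v ^ 2) * ∑ v ∈ S, ⟪q, v⟫ ^ 2 := by ring
    _ ≤ ‖q‖ ^ 2 * ∑ v ∈ S, ⟪q, v⟫ ^ 2 := by gcongr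
    _ = (∑ v ∈ S, ⟪q, v⟫ ^ 2) * ‖q‖ ^ 2 := by ring

theorem sigmaMin_mul_norm_sq_starProjection_le (S : Finset E) (u : E) :
    sigmaMin S * ‖π[S] u‖ ^ 2 ≤ ∑ v ∈ S, ⟪u, v⟫ ^ 2 := by
  have hproj : ∀ v ∈ S, ⟪π[S] u, v⟫ = ⟪u, v⟫ := fun v hv => by
    rw [inner_starProjection_left_eq_right, starProjection_eq_self_iff.2 (subset_span hv)]
  calc sigmaMin S * ‖π[S] u‖ ^ 2 ≤ ∑ v ∈ S, ⟪π[S] u, v⟫ ^ 2 :=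
        sigmaMin_mul_norm_sq_le_sum_inner_sq S (starProjection_apply_mem _ u)
    _ = ∑ v ∈ S, ⟪u, v⟫ ^ 2 := Finset.sum_congr rfl fun v hv => by rw [hproj v hv]

theorem fVec_eq_norm_sq_starProjection (u : E) (S : Finset E) : fVec u S = ‖π[S] u‖ ^ 2 := rfl

theorem inner_sq_le_mul_fVec_insert_sub (u v : E) (T : Finset E) :
    ⟪u - π[T] u, v⟫ ^ 2 ≤ ‖v‖ ^ 2 * (fVec u (insert v T) - fVec u T) := by
  rw [fVec_eq_norm_sq_starProjection, fVec_eq_norm_sq_starProjection]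
  refine inner_sub_starProjection_sq_le (span_mono ?_) u (subset_span ?_) <;> simp

theorem fVec_sub_fVec_le (u : E) (S T : Finset E) :
    fVec u S - fVec u T ≤ 2 * ‖π[S] u‖ * ‖π[S] (u - π[T] u)‖ :=
  norm_sq_starProjection_sub_norm_sq_starProjection_le _ _ u

variable {n : ℕ} (A : Fin n → EuclideanSpace ℝ (Fin m))

theorem sigmaMin_mul_sum_le_sum_fMat_insert_sub (S T : Finset E) (hS : ∀ v ∈ S, ‖v‖ = 1) :
    sigmaMin S * ∑ j, ‖π[S] (A j - π[T] (A j))‖ ^ 2 ≤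
      ∑ v ∈ S, (fMat A (insert v T) - fMat A T) := by
  calc sigmaMin S * ∑ j, ‖π[S] (A j - π[T] (A j))‖ ^ 2
      ≤ ∑ j, ∑ v ∈ S, ⟪A j - π[T] (A j), v⟫ ^ 2 := by
        rw [Finset.mul_sum]
        exact Finset.sum_le_sum fun j _ => sigmaMin_mul_norm_sq_starProjection_le S _
    _ = ∑ v ∈ S, ∑ j, ⟪A j - π[T] (A j), v⟫ ^ 2 := Finset.sum_comm
    _ ≤ ∑ v ∈ S, ∑ j, (fVec (A j) (insert v T) - fVec (A j) T) := by
        refine Finset.sum_le_sum fun v hv => Finset.sum_le_sum fun j _ => ?_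
        simpa only [hS v hv, one_pow, one_mul] using inner_sq_le_mul_fVec_insert_sub (A j) v T
    _ = ∑ v ∈ S, (fMat A (insert v T) - fMat A T) := by
        simp only [fMat, Finset.sum_sub_distrib]

theorem sq_sum_max_zero_fVec_sub_le (S T : Finset E) :
    (∑ j, max 0 (fVec (A j) S - fVec (A j) T)) ^ 2 ≤
      4 * fMat A S * ∑ j, ‖π[S] (A j - π[T] (A j))‖ ^ 2 := by
  have hgap : ∑ j, max 0 (fVec (A j) S - fVec (A j) T) ≤
      2 * ∑ j, ‖π[S] (A j)‖ * ‖π[S] (A j - π[T] (A j))‖ := by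
    rw [Finset.mul_sum]
    refine Finset.sum_le_sum fun j _ => max_le (by positivity) ?_
    linarith [fVec_sub_fVec_le (A j) S T]
  have hcs := Finset.sum_mul_sq_le_sq_mul_sq Finset.univ (fun j => ‖π[S] (A j)‖)
    (fun j => ‖π[S] (A j - π[T] (A j))‖)
  calc (∑ j, max 0 (fVec (A j) S - fVec (A j) T)) ^ 2
      ≤ (2 * ∑ j, ‖π[S] (A j)‖ * ‖π[S] (A j - π[T] (A j))‖) ^ 2 :=
        pow_le_pow_left₀ (Finset.sum_nonneg fun _ _ => le_max_left _ _) hgap 2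
    _ ≤ 4 * fMat A S * ∑ j, ‖π[S] (A j - π[T] (A j))‖ ^ 2 := by
        rw [mul_pow, mul_assoc]
        gcongr
        · norm_num
        · exact hcs

theorem max_zero_fMat_sub_le (S T : Finset E) :
    max 0 (fMat A S - fMat A T) ≤ ∑ j, max 0 (fVec (A j) S - fVec (A j) T) := by
  refine max_le (Finset.sum_nonneg fun j _ => le_max_left _ _) ?_
  rw [fMat, fMat, ← Finset.sum_sub_distrib]
  exact Finset.sum_le_sum fun j _ => le_max_right _ _

theorem fMat_nonneg (S : Finset E) : 0 ≤ fMat A S :=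
  Finset.sum_nonneg fun _ _ => sq_nonneg _

end Euclidean

theorem sum_marginal_gain_matrix_general {m n : ℕ}
    (A : Fin n → EuclideanSpace ℝ (Fin m))
    (S T : Finset (EuclideanSpace ℝ (Fin m)))
    (hSunit : ∀ v ∈ S, ‖v‖ = 1) :
    (sigmaMin S * (∑ j, max 0 (fVec (A j) S - fVec (A j) T)) ^ 2 / (4 * fMat A S) ≤
      ∑ v ∈ S, (fMat A (insert v T) - fMat A T)) ∧
    (sigmaMin S * (max 0 (fMat A S - fMat A T)) ^ 2 / (4 * fMat A S) ≤
      ∑ v ∈ S, (fMat A (insert v T) - fMat A T)) := by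
  set R := ∑ j, ‖π[S] (A j - π[T] (A j))‖ ^ 2
  set G := ∑ v ∈ S, (fMat A (insert v T) - fMat A T)
  have hσ := sigmaMin_nonneg S
  have hF := fMat_nonneg A S
  have hgain : sigmaMin S * R ≤ G := sigmaMin_mul_sum_le_sum_fMat_insert_sub A S T hSunit
  have hG : 0 ≤ G := (mul_nonneg hσ (by positivity)).trans hgain
  have hfirst : sigmaMin S * (∑ j, max 0 (fVec (A j) S - fVec (A j) T)) ^ 2 / (4 * fMat A S) ≤ G := by
    refine div_le_of_le_mul₀ (by linarith) hG ?_
    calc sigmaMin S * (∑ j, max 0 (fVec (A j) S - fVec (A j) T)) ^ 2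
        ≤ sigmaMin S * (4 * fMat A S * R) := by gcongr; exact sq_sum_max_zero_fVec_sub_le A S T
      _ = 4 * fMat A S * (sigmaMin S * R) := by ring
      _ ≤ 4 * fMat A S * G := by gcongr
      _ = G * (4 * fMat A S) := mul_comm _ _
  refine ⟨hfirst, hfirst.trans' ?_⟩
  gcongr
  exact max_zero_fMat_sub_le A S T

/-- Summed marginal gains dominate a truncated squared gap (matrix version). -/
theorem sum_marginal_gain_matrix {m n : ℕ}
    (A : Fin n → EuclideanSpace ℝ (Fin m))
    (S T : Finset (EuclideanSpace ℝ (Fin m)))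
    (hSunit : ∀ v ∈ S, ‖v‖ = 1)
    (hσ : 0 < sigmaMin S) (hS0 : 0 < fMat A S) :
    (sigmaMin S * (∑ j, max 0 (fVec (A j) S - fVec (A j) T)) ^ 2 / (4 * fMat A S) ≤
      ∑ v ∈ S, (fMat A (insert v T) - fMat A T)) ∧
    (sigmaMin S * (max 0 (fMat A S - fMat A T)) ^ 2 / (4 * fMat A S) ≤
      ∑ v ∈ S, (fMat A (insert v T) - fMat A T)) :=
  sum_marginal_gain_matrix_general A S T hSunit
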